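/- arXiv:math-ph/0609088 — 2 statements merged into one kernel-verified Lean document; each statement's English description precedes it below -/
import Mathlib

section
/- Conversely, if ψ ∈ D(e^{cA/2}) for a self-adjoint operator A and c > 0, then z ↦ ⟨ψ, e^{izA}ψ⟩ is holomorphic on the strip {z ∈ ℂ : 0 < Im z < c} and continuous on its closure, with |⟨ψ, e^{izA}ψ⟩| ≤ ‖ψ‖·‖e^{(Im z)A/2}ψ‖·(bounded uniformly on the strip by ‖ψ‖² + ‖e^{cA/2}ψ‖²). -/
/-!
On the closed strip `|e^{izl}| = e^{-(Im z) l}` lies below `e^{-0·l} + e^{-cl} = 1 + e^{-cl}`,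
since `s ↦ e^{-sl}` is monotone; this one integrable majorant gives integrability, the bound, and
continuity by dominated convergence. For holomorphy, differentiate under the integral sign:
when `Im z` stays in `[a, b]` with `0 < a < b < c`, the derivative `i l e^{izl}` is dominated
by `a⁻¹ + (c - b)⁻¹ e^{-cl}`, because the spare decay `e^{-al}` for `l ≥ 0`, resp. `e^{-(c-b)|l|}`
for `l ≤ 0`, absorbs the factor `|l|`.
-/

open MeasureTheory

lemma norm_cexp_I_mul_mul_ofReal (z : ℂ) (l : ℝ) :
    ‖Complex.exp (Complex.I * z * l)‖ = Real.exp (-(z.im * l)) := by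
  simp [Complex.norm_exp, Complex.mul_re]

lemma exp_neg_mul_le_add_of_mem_Icc {a b s : ℝ} (has : a ≤ s) (hsb : s ≤ b) (l : ℝ) :
    Real.exp (-(s * l)) ≤ Real.exp (-(a * l)) + Real.exp (-(b * l)) := by
  rcases le_total 0 l with hl | hl
  · have : Real.exp (-(s * l)) ≤ Real.exp (-(a * l)) := Real.exp_le_exp.2 (by nlinarith)
    linarith [Real.exp_pos (-(b * l))]
  · have : Real.exp (-(s * l)) ≤ Real.exp (-(b * l)) := Real.exp_le_exp.2 (by nlinarith)
    linarith [Real.exp_pos (-(a * l))]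

lemma abs_mul_exp_neg_mul_le {a b c s : ℝ} (ha : 0 < a) (hbc : b < c) (has : a ≤ s)
    (hsb : s ≤ b) (l : ℝ) :
    |l| * Real.exp (-(s * l)) ≤ a⁻¹ + (c - b)⁻¹ * Real.exp (-(c * l)) := by
  have hcb : 0 < c - b := sub_pos.2 hbc
  rcases le_total 0 l with hl | hl
  · calc |l| * Real.exp (-(s * l))
        ≤ a⁻¹ * Real.exp (a * l) * Real.exp (-(a * l)) := by
          rw [abs_of_nonneg hl]
          gcongr ?_ * Real.exp ?_
          · exact Real.le_inv_mul_exp l ha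
          · nlinarith
      _ = a⁻¹ := by rw [mul_assoc, ← Real.exp_add]; simp
      _ ≤ a⁻¹ + (c - b)⁻¹ * Real.exp (-(c * l)) := le_add_of_nonneg_right (by positivity)
  · calc |l| * Real.exp (-(s * l))
        ≤ (c - b)⁻¹ * Real.exp ((c - b) * -l) * Real.exp (-(b * l)) := by
          rw [abs_of_nonpos hl]
          gcongr ?_ * Real.exp ?_
          · exact Real.le_inv_mul_exp (-l) hcb
          · nlinarith
      _ = (c - b)⁻¹ * Real.exp (-(c * l)) := by rw [mul_assoc, ← Real.exp_add]; ring_nf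
      _ ≤ a⁻¹ + (c - b)⁻¹ * Real.exp (-(c * l)) := le_add_of_nonneg_left (by positivity)

section StripIntegral

variable {μ : Measure ℝ} {c : ℝ}

lemma aestronglyMeasurable_cexp_I_mul_mul_ofReal (z : ℂ) :
    AEStronglyMeasurable (fun l : ℝ => Complex.exp (Complex.I * z * l)) μ :=
  (by fun_prop : Continuous fun l : ℝ => Complex.exp (Complex.I * z * l)).aestronglyMeasurable

variable [IsFiniteMeasure μ]

lemma norm_cexp_I_mul_mul_ofReal_le {z : ℂ} (h0 : 0 ≤ z.im) (h1 : z.im ≤ c) (l : ℝ) :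
    ‖Complex.exp (Complex.I * z * l)‖ ≤ 1 + Real.exp (-(c * l)) := by
  simpa [norm_cexp_I_mul_mul_ofReal] using exp_neg_mul_le_add_of_mem_Icc h0 h1 l

lemma integrable_cexp_I_mul_mul_ofReal
    (hdom : Integrable (fun l : ℝ => Real.exp (-(c * l))) μ) {z : ℂ} (h0 : 0 ≤ z.im)
    (h1 : z.im ≤ c) : Integrable (fun l : ℝ => Complex.exp (Complex.I * z * l)) μ :=
  ((integrable_const 1).add hdom).mono' (aestronglyMeasurable_cexp_I_mul_mul_ofReal z)
    (.of_forall (norm_cexp_I_mul_mul_ofReal_le h0 h1))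

lemma norm_integral_cexp_I_mul_mul_ofReal_le
    (hdom : Integrable (fun l : ℝ => Real.exp (-(c * l))) μ) {z : ℂ} (h0 : 0 ≤ z.im)
    (h1 : z.im ≤ c) :
    ‖∫ l, Complex.exp (Complex.I * z * l) ∂μ‖ ≤
      (μ Set.univ).toReal + ∫ l, Real.exp (-(c * l)) ∂μ := by
  calc ‖∫ l, Complex.exp (Complex.I * z * l) ∂μ‖ ≤ ∫ l, (1 + Real.exp (-(c * l))) ∂μ :=
        norm_integral_le_of_norm_le ((integrable_const _).add hdom)
          (.of_forall (norm_cexp_I_mul_mul_ofReal_le h0 h1))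
    _ = (μ Set.univ).toReal + ∫ l, Real.exp (-(c * l)) ∂μ := by
        rw [integral_add (integrable_const _) hdom, integral_const, smul_eq_mul, mul_one,
          measureReal_def]

lemma continuousOn_integral_cexp_I_mul_mul_ofReal
    (hdom : Integrable (fun l : ℝ => Real.exp (-(c * l))) μ) :
    ContinuousOn (fun z : ℂ => ∫ l, Complex.exp (Complex.I * z * l) ∂μ)
      {z : ℂ | 0 ≤ z.im ∧ z.im ≤ c} :=
  continuousOn_of_dominated (fun z _ => aestronglyMeasurable_cexp_I_mul_mul_ofReal z)
    (fun _ hz => .of_forall (norm_cexp_I_mul_mul_ofReal_le hz.1 hz.2))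
    ((integrable_const _).add hdom) (.of_forall fun _ => by fun_prop)

lemma differentiableOn_integral_cexp_I_mul_mul_ofReal
    (hdom : Integrable (fun l : ℝ => Real.exp (-(c * l))) μ) :
    DifferentiableOn ℂ (fun z : ℂ => ∫ l, Complex.exp (Complex.I * z * l) ∂μ)
      {z : ℂ | 0 < z.im ∧ z.im < c} := by
  intro z₀ ⟨h0, h1⟩
  obtain ⟨a, ha, ha₀⟩ := exists_between h0
  obtain ⟨b, hb₀, hbc⟩ := exists_between h1
  have hU : {z : ℂ | a < z.im ∧ z.im < b} ∈ nhds z₀ :=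
    ((isOpen_lt continuous_const Complex.continuous_im).inter
      (isOpen_lt Complex.continuous_im continuous_const)).mem_nhds ⟨ha₀, hb₀⟩
  refine (hasDerivAt_integral_of_dominated_loc_of_deriv_le
    (F' := fun z (l : ℝ) => Complex.exp (Complex.I * z * l) * (Complex.I * l))
    (bound := fun l => a⁻¹ + (c - b)⁻¹ * Real.exp (-(c * l))) hU
    (.of_forall aestronglyMeasurable_cexp_I_mul_mul_ofReal)
    (integrable_cexp_I_mul_mul_ofReal hdom h0.le h1.le)
    (by fun_prop : Continuous _).aestronglyMeasurable
    (.of_forall fun l z hz => ?_) ((integrable_const _).add (hdom.const_mul _))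
    (.of_forall fun l z _ => ?_)).2.differentiableAt.differentiableWithinAt
  · rw [norm_mul, norm_cexp_I_mul_mul_ofReal, mul_comm]
    simpa using abs_mul_exp_neg_mul_le ha hbc hz.1.le hz.2.le l
  · simpa using ((hasDerivAt_id z).const_mul Complex.I).mul_const (l : ℂ) |>.cexp

end StripIntegral

theorem strip_analyticity_of_domain_exp_general
    (μ : Measure ℝ) [IsFiniteMeasure μ] (c : ℝ)
    (hdom : Integrable (fun l : ℝ => Real.exp (-(c * l))) μ) :
    DifferentiableOn ℂ
      (fun z : ℂ => ∫ l, Complex.exp (Complex.I * z * l) ∂μ)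
      {z : ℂ | 0 < z.im ∧ z.im < c} ∧
    ContinuousOn
      (fun z : ℂ => ∫ l, Complex.exp (Complex.I * z * l) ∂μ)
      {z : ℂ | 0 ≤ z.im ∧ z.im ≤ c} ∧
    ∀ z : ℂ, 0 ≤ z.im → z.im ≤ c →
      ‖∫ l, Complex.exp (Complex.I * z * l) ∂μ‖ ≤
        (μ Set.univ).toReal + ∫ l, Real.exp (-(c * l)) ∂μ :=
  ⟨differentiableOn_integral_cexp_I_mul_mul_ofReal hdom,
    continuousOn_integral_cexp_I_mul_mul_ofReal hdom,
    fun _ h0 h1 => norm_integral_cexp_I_mul_mul_ofReal_le hdom h0 h1⟩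

/-- Converse spectral-theorem step: let `μ` be the spectral measure of a
self-adjoint operator `A` in the vector `ψ`.  If `ψ ∈ D(e^{cA/2})`, i.e.
`∫ e^{-cλ} dμ(λ) < ∞`, then `z ↦ ⟨ψ, e^{izA}ψ⟩ = ∫ e^{izλ} dμ(λ)` is
holomorphic on the open strip `0 < Im z < c`, continuous on its closure, and
uniformly bounded there by `‖ψ‖² + ‖e^{cA/2}ψ‖² = μ(ℝ) + ∫ e^{-cλ} dμ`. -/
theorem strip_analyticity_of_domain_exp
    (μ : Measure ℝ) [IsFiniteMeasure μ] (c : ℝ) (hc : 0 < c)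
    (hdom : Integrable (fun l : ℝ => Real.exp (-(c * l))) μ) :
    DifferentiableOn ℂ
      (fun z : ℂ => ∫ l, Complex.exp (Complex.I * z * l) ∂μ)
      {z : ℂ | 0 < z.im ∧ z.im < c} ∧
    ContinuousOn
      (fun z : ℂ => ∫ l, Complex.exp (Complex.I * z * l) ∂μ)
      {z : ℂ | 0 ≤ z.im ∧ z.im ≤ c} ∧
    ∀ z : ℂ, 0 ≤ z.im → z.im ≤ c →
      ‖∫ l, Complex.exp (Complex.I * z * l) ∂μ‖ ≤
        (μ Set.univ).toReal + ∫ l, Real.exp (-(c * l)) ∂μ :=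
  strip_analyticity_of_domain_exp_general μ c hdom
end

section
/- Let H be a complex Hilbert space and ρ a bounded nonnegative self-adjoint operator on H. Then the map h ↦ exp(−(1/4)⟨h, (1+2ρ)h⟩) on H is a function of positive type with respect to the Weyl relations, i.e., for any h₁,…,h_n ∈ H and c₁,…,c_n ∈ ℂ, the matrix M_{jk} = c̄_j c_k exp(−(1/4)⟨h_j−h_k, (1+2ρ)(h_j−h_k)⟩ − (i/2) Im⟨h_j,h_k⟩) is positive semidefinite. -/
/-!
Expanding the quadratic form, the exponent of the `(j, k)` entry is
`B j k - a j / 4 - a k / 4` with `a j = ⟪h j, (1 + 2ρ) h j⟫` real and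
`B j k = (⟪h j, ρ h k⟫ + ⟪h k, ρ h j⟫ + ⟪h k, h j⟫) / 2`: the term `-(i/2) Im ⟪h j, h k⟫` is exactly
what turns the symmetrised `Re ⟪h j, h k⟫` into `⟪h k, h j⟫`. So `B` is a sum of matrices
`⟪v j, T v k⟫` of positive operators and their transposes, hence positive semidefinite. By the
Schur product theorem every Hadamard power of `B` is positive semidefinite, hence so is the entrywise
exponential, a nonnegative combination of them; a last Hadamard product with the rank-one matrix
`conj (d j) * d k`, `d j = c j * exp (-a j / 4)`, gives the claim.
-/

open scoped ComplexOrder InnerProductSpace Nat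
open Matrix

namespace Matrix.PosSemidef

variable {n : Type*} [Fintype n]

theorem map_pow {𝕜 : Type*} [RCLike 𝕜] {A : Matrix n n 𝕜} (hA : A.PosSemidef) (p : ℕ) :
    (A.map (· ^ p)).PosSemidef := by
  induction p with
  | zero =>
    convert posSemidef_vecMulVec_star_self (1 : n → 𝕜) using 1
    ext; simp [vecMulVec]
  | succ p ih =>
    rw [show A.map (· ^ (p + 1)) = A.map (· ^ p) ⊙ A by ext; simp [pow_succ]]
    exact ih.hadamard hA

theorem map_exp {A : Matrix n n ℂ} (hA : A.PosSemidef) : (A.map Complex.exp).PosSemidef := by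
  refine .of_dotProduct_mulVec_nonneg (hA.isHermitian.map _ Complex.exp_conj) fun x => ?_
  have hexp (z : ℂ) : HasSum (fun p : ℕ => (p !⁻¹ : ℝ) • z ^ p) (Complex.exp z) := by
    simpa [Complex.exp_eq_exp_ℂ] using NormedSpace.exp_series_hasSum_exp' (𝕂 := ℝ) z
  have hsum : HasSum (fun p : ℕ => (p !⁻¹ : ℝ) • (star x ⬝ᵥ A.map (· ^ p) *ᵥ x))
      (star x ⬝ᵥ A.map Complex.exp *ᵥ x) := by
    simp only [dotProduct, mulVec, Finset.mul_sum, Finset.smul_sum, map_apply]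
    refine hasSum_sum fun i _ => hasSum_sum fun j _ => ?_
    have hij := ((hexp (A i j)).mul_left (star x i)).mul_right (x j)
    simp only [mul_smul_comm, smul_mul_assoc, mul_assoc] at hij
    exact hij
  exact hsum.nonneg fun p => smul_nonneg (by positivity) ((hA.map_pow p).dotProduct_mulVec_nonneg x)

theorem star_mul_mul_exp {B : Matrix n n ℂ} (hB : B.PosSemidef) (d : n → ℂ) :
    (of fun j k => star (d j) * d k * Complex.exp (B j k)).PosSemidef :=
  (posSemidef_vecMulVec_star_self d).hadamard hB.map_exp

end Matrix.PosSemidef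

namespace LinearMap.IsPositive

variable {𝕜 E ι : Type*} [RCLike 𝕜] [NormedAddCommGroup E] [InnerProductSpace 𝕜 E] [Fintype ι]
  {T : E →ₗ[𝕜] E}

theorem posSemidef_inner_apply (hT : T.IsPositive) (v : ι → E) :
    (of fun i j => ⟪v i, T (v j)⟫_𝕜).PosSemidef := by
  refine .of_dotProduct_mulVec_nonneg ?_ fun x => ?_
  · ext i j
    simp [hT.isSymmetric _ _]
  · have hquad : star x ⬝ᵥ (of fun i j => ⟪v i, T (v j)⟫_𝕜) *ᵥ x
        = ⟪∑ i, x i • v i, T (∑ j, x j • v j)⟫_𝕜 := by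
      simp only [dotProduct, mulVec, of_apply, Finset.mul_sum, map_sum, map_smul, sum_inner,
        inner_sum, inner_smul_left, inner_smul_right, Pi.star_apply, RCLike.star_def]
      rw [Finset.sum_comm]
      exact Finset.sum_congr rfl fun i _ => Finset.sum_congr rfl fun j _ => by ring
    rw [hquad]
    exact hT.inner_nonneg_right _

theorem posSemidef_symmetrized_inner_apply (hT : T.IsPositive) (v : ι → E) :
    (of fun j k => (⟪v j, T (v k)⟫_𝕜 + ⟪v k, T (v j)⟫_𝕜 + ⟪v k, v j⟫_𝕜) / 2).PosSemidef := by
  have hG := hT.posSemidef_inner_apply v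
  have hsum := (hG.add hG.transpose).add (posSemidef_gram 𝕜 v).transpose
  convert hsum.smul (show (0 : ℝ) ≤ 2⁻¹ by norm_num) using 1
  ext j k
  simp only [of_apply, Matrix.smul_apply, Matrix.add_apply, transpose_apply, gram_apply,
    RCLike.real_smul_eq_coe_mul]
  push_cast
  ring

end LinearMap.IsPositive

theorem quasifree_exponent_eq {H : Type*} [NormedAddCommGroup H] [InnerProductSpace ℂ H]
    (T : H →L[ℂ] H) (x y : H) :
    -(1 / 4 : ℂ) * ⟪x - y, (ContinuousLinearMap.id ℂ H + 2 • T) (x - y)⟫_ℂ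
        - (Complex.I / 2) * ((⟪x, y⟫_ℂ).im : ℂ)
      = (⟪x, T y⟫_ℂ + ⟪y, T x⟫_ℂ + ⟪y, x⟫_ℂ) / 2
        - ⟪x, (ContinuousLinearMap.id ℂ H + 2 • T) x⟫_ℂ / 4
        - ⟪y, (ContinuousLinearMap.id ℂ H + 2 • T) y⟫_ℂ / 4 := by
  have him := Complex.sub_conj ⟪x, y⟫_ℂ
  rw [inner_conj_symm] at him
  push_cast at him
  simp only [_root_.add_apply, ContinuousLinearMap.id_apply, map_sub, inner_sub_left,
    inner_sub_right, inner_add_right, two_smul]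
  linear_combination (1 / 4 : ℂ) * him

/-- Positivity of the quasi-free thermal state on the Weyl algebra: for a
bounded nonnegative self-adjoint operator `ρ` on a complex Hilbert space `H`,
any `h₁,…,hₙ ∈ H` and `c₁,…,cₙ ∈ ℂ`, the matrix
`M j k = conj (c j) * c k * exp (-(1/4)⟨h j - h k, (1+2ρ)(h j - h k)⟩
  - (i/2) Im ⟨h j, h k⟩)` is positive semidefinite. -/
theorem quasifree_state_positive
    {H : Type*} [NormedAddCommGroup H] [InnerProductSpace ℂ H] [CompleteSpace H]
    (ρ : H →L[ℂ] H) (hsa : IsSelfAdjoint ρ)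
    (hpos : ∀ h : H, 0 ≤ (inner ℂ h (ρ h) : ℂ).re)
    (n : ℕ) (h : Fin n → H) (c : Fin n → ℂ) :
    (Matrix.of fun j k : Fin n =>
      (starRingEnd ℂ) (c j) * c k *
        Complex.exp (-(1 / 4 : ℂ) *
            (inner ℂ (h j - h k) ((ContinuousLinearMap.id ℂ H + 2 • ρ) (h j - h k)) : ℂ)
          - (Complex.I / 2) * ((inner ℂ (h j) (h k) : ℂ).im : ℂ))).PosSemidef := by
  have hρ : ρ.IsPositive := ContinuousLinearMap.isPositive_def'.2
    ⟨hsa, fun x => by simpa [ContinuousLinearMap.reApplyInnerSelf, inner_re_symm] using hpos x⟩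
  have hA : (ContinuousLinearMap.id ℂ H + 2 • ρ).IsPositive :=
    ContinuousLinearMap.isPositive_id.add (two_nsmul ρ ▸ hρ.add hρ)
  have hA_real (x : H) : (starRingEnd ℂ) ⟪x, (ContinuousLinearMap.id ℂ H + 2 • ρ) x⟫_ℂ
      = ⟪x, (ContinuousLinearMap.id ℂ H + 2 • ρ) x⟫_ℂ :=
    (inner_conj_symm _ _).trans (hA.isSymmetric x x)
  let d : Fin n → ℂ := fun j =>
    c j / Complex.exp (⟪h j, (ContinuousLinearMap.id ℂ H + 2 • ρ) (h j)⟫_ℂ / 4)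
  convert (hρ.toLinearMap.posSemidef_symmetrized_inner_apply h).star_mul_mul_exp d using 1
  ext j k
  simp only [of_apply, d, quasifree_exponent_eq, Complex.exp_sub, RCLike.star_def, map_div₀,
    ← Complex.exp_conj, Complex.conj_ofNat, hA_real, ContinuousLinearMap.coe_coe]
  ring
end
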